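/- Let $p$ be a prime and let $G$ be a finite abelian $p$-group that is not cyclic (equivalently, of rank at least $2$). Then the quotient ring $\mathbb{Z}_p[G]/I(G)$ is nonzero and satisfies $p = 0$; in particular it contains $p$-torsion, i.e., there is a nonzero element $x \in \mathbb{Z}_p[G]/I(G)$ with $p \cdot x = 0$ (for instance $x = 1$). (This is the $p$-adic $K$-theoretic input to the main theorem: $K_p^0(BA)/I_{tr}$ contains $p$-torsion when $\mathrm{rank}(A) \geq 2$.) -/

import Mathlib

open scoped Classical

/-- The norm element `N_H = ∑_{h ∈ H} h` of a subgroup `H` in the group algebra `R[G]`. -/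
noncomputable def normElt (R : Type*) [CommRing R] {G : Type*} [Group G] [Finite G]
    (H : Subgroup G) : MonoidAlgebra R G :=
  letI : Fintype H := Fintype.ofFinite H
  ∑ h : H, MonoidAlgebra.single (h : G) 1

/-- The norm ideal `I(G) ⊆ R[G]`, generated by the norm elements of all nontrivial
subgroups of `G`. -/
noncomputable def normIdeal (R : Type*) [CommRing R] (G : Type*) [Group G] [Finite G] :
    Ideal (MonoidAlgebra R G) :=
  Ideal.span {x | ∃ H : Subgroup G, H ≠ ⊥ ∧ x = normElt R H}

/-!
The augmentation `ℤ_p[G] → 𝔽_p` sends `N_H` to `|H| ≡ 0`, so `I(G)` is a proper ideal.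
For `p ∈ I(G)`, let `Ω = {x | x ^ p = 1}`. Each nontrivial `g ∈ Ω` generates a subgroup of order `p`,
and each nontrivial element of `Ω` lies in exactly `p - 1` of them, so
`∑_{g ∈ Ω, g ≠ 1} N_⟨g⟩ - (p - 1) N_Ω = |Ω| - p`. As `G` is not cyclic, `Ω` contains, besides
the order-`p` subgroup of a cyclic subgroup of maximal order, an element outside it; hence
`p ^ 2 ∣ |Ω|` and `|Ω| - p` is `p` times a unit of `ℤ_p`.
-/

open Subgroup Finset MonoidAlgebra

section OrderP

variable {G : Type*} [Group G] [Finite G] {p : ℕ} [Fact p.Prime]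

theorem zpowers_eq_zpowers_of_mem {g h : G} (hg : orderOf g = p) (hh : h ∈ zpowers g)
    (h1 : h ≠ 1) : zpowers h = zpowers g := by
  have hhp : h ^ p = 1 := by
    obtain ⟨n, rfl⟩ := hh
    rw [← zpow_natCast, ← zpow_mul, mul_comm, zpow_mul, zpow_natCast, ← hg, pow_orderOf_eq_one,
      one_zpow]
  refine eq_of_le_of_card_ge (zpowers_le.mpr hh) ?_
  rw [Nat.card_zpowers, Nat.card_zpowers, hg, orderOf_eq_prime hhp h1]

theorem mem_zpowers_comm {g h : G} (hg : g ^ p = 1) (hh : h ^ p = 1) (hg1 : g ≠ 1) (hh1 : h ≠ 1) :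
    h ∈ zpowers g ↔ g ∈ zpowers h := by
  constructor <;> intro hmem
  · rw [zpowers_eq_zpowers_of_mem (orderOf_eq_prime hg hg1) hmem hh1]
    exact mem_zpowers g
  · rw [zpowers_eq_zpowers_of_mem (orderOf_eq_prime hh hh1) hmem hg1]
    exact mem_zpowers h

end OrderP

namespace IsPGroup

variable {p : ℕ} {G : Type*}

theorem exists_notMem_pow_mem [Group G] (hG : IsPGroup p G) {H : Subgroup G} {g : G}
    (hg : g ∉ H) : ∃ k ∉ H, k ^ p ∈ H := by
  obtain ⟨n, hn⟩ := hG g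
  induction n generalizing g with
  | zero =>
    rw [pow_zero, pow_one] at hn
    exact absurd (hn ▸ H.one_mem) hg
  | succ n ih =>
    by_cases hgp : g ^ p ∈ H
    · exact ⟨g, hg, hgp⟩
    · exact ih hgp (by rw [← pow_mul, ← pow_succ', hn])

variable [Fact p.Prime] [CommGroup G] [Finite G]

theorem exists_pow_eq_one_notMem_zpowers (hG : IsPGroup p G) {g : G}
    (hg : orderOf g = Monoid.exponent G) (htop : zpowers g ≠ ⊤) :
    ∃ b, b ^ p = 1 ∧ b ∉ zpowers g := by
  obtain ⟨h, hh⟩ : ∃ h, h ∉ zpowers g := by simpa [eq_top_iff'] using htop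
  obtain ⟨k, hk, hkp⟩ := hG.exists_notMem_pow_mem hh
  obtain ⟨m, hm⟩ := mem_zpowers_iff.mp hkp
  -- Since `g` has maximal order, `g ^ m = k ^ p` forces `p ∣ m`; then `k * g ^ (-m / p)` works.
  obtain ⟨n, hn⟩ : p ∣ orderOf g :=
    hg ▸ (hG.dvd_orderOf (ne_of_mem_of_not_mem (one_mem _) hk).symm).trans
      (Monoid.order_dvd_exponent k)
  obtain ⟨c, rfl⟩ : (p : ℤ) ∣ m := by
    have hmn : g ^ (m * n) = 1 := by
      rw [zpow_mul, hm, zpow_natCast, ← pow_mul, ← hn, hg, Monoid.pow_exponent_eq_one]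
    have hn0 : (n : ℤ) ≠ 0 :=
      Nat.cast_ne_zero.mpr (right_ne_zero_of_mul (hn ▸ (orderOf_pos g).ne'))
    rw [← orderOf_dvd_iff_zpow_eq_one, hn, Nat.cast_mul] at hmn
    exact (mul_dvd_mul_iff_right hn0).mp hmn
  refine ⟨k * (g ^ c)⁻¹, ?_, fun hmem => hk ?_⟩
  · rw [mul_pow, inv_pow, ← zpow_natCast (g ^ c), ← zpow_mul, mul_comm c, hm, mul_inv_cancel]
  · simpa using mul_mem hmem (zpow_mem (mem_zpowers g) c)

theorem sq_dvd_card_ker_powMonoidHom (hG : IsPGroup p G) (hnc : ¬IsCyclic G) :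
    p ^ 2 ∣ Nat.card (powMonoidHom p : G →* G).ker := by
  set Ω := (powMonoidHom p : G →* G).ker
  have hmemΩ : ∀ x, x ∈ Ω ↔ x ^ p = 1 := fun x => MonoidHom.mem_ker
  obtain ⟨g, hg⟩ := Monoid.exists_orderOf_eq_exponent (G := G) Monoid.ExponentExists.of_finite
  have htop : zpowers g ≠ ⊤ := fun h => hnc (isCyclic_iff_exists_zpowers_eq_top.mpr ⟨g, h⟩)
  obtain ⟨b, hbp, hb⟩ := hG.exists_pow_eq_one_notMem_zpowers hg htop
  have hpg : p ∣ orderOf g :=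
    hg ▸ (hG.dvd_orderOf (ne_of_mem_of_not_mem (one_mem _) hb).symm).trans
      (Monoid.order_dvd_exponent b)
  set a := g ^ (orderOf g / p)
  have ha : orderOf a = p := orderOf_pow_orderOf_div (orderOf_pos g).ne' hpg
  have haΩ : zpowers a ≤ Ω := zpowers_le.mpr ((hmemΩ a).mpr (ha ▸ pow_orderOf_eq_one a))
  have hne : zpowers a ≠ Ω := fun heq =>
    hb (zpowers_le.mpr (pow_mem (mem_zpowers g) _) (heq ▸ (hmemΩ b).mpr hbp))
  obtain ⟨k, hk⟩ := (hG.to_subgroup Ω).exists_card_eq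
  have hk2 : 2 ≤ k := by
    by_contra! hk1
    refine hne (eq_of_le_of_card_ge haΩ ?_)
    rw [hk, Nat.card_zpowers, ha]
    exact (pow_le_pow_right₀ (Fact.out : p.Prime).one_le (Nat.le_of_lt_succ hk1)).trans_eq
      (pow_one p)
  exact hk ▸ pow_dvd_pow p hk2

end IsPGroup

section NormElt

variable {G : Type*} [Group G] (R : Type*) [CommRing R] {p : ℕ} [Fact p.Prime] {E : Subgroup G}

theorem normElt_mem_normIdeal [Finite G] {H : Subgroup G} (hH : H ≠ ⊥) :
    normElt R H ∈ normIdeal R G :=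
  Ideal.subset_span ⟨H, hH, rfl⟩

theorem IsPGroup.normIdeal_le_ker [Finite G] (hG : IsPGroup p G)
    (f : R →+* ZMod p) :
    normIdeal R G ≤
      RingHom.ker (liftNCRingHom f (1 : G →* ZMod p) fun _ _ => Commute.all _ _) := by
  rw [normIdeal, Ideal.span_le]
  rintro _ ⟨H, hH, rfl⟩
  obtain ⟨n, hn⟩ := (hG.to_subgroup H).exists_card_eq
  have hn0 : n ≠ 0 := by
    rintro rfl
    exact hH (H.eq_bot_of_card_eq hn)
  simp [normElt, ← Nat.card_eq_fintype_card, hn, hn0]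

theorem IsPGroup.normIdeal_ne_top [Finite G] (hG : IsPGroup p G)
    (f : R →+* ZMod p) : normIdeal R G ≠ ⊤ :=
  ne_top_of_le_ne_top (RingHom.ker_ne_top _) (hG.normIdeal_le_ker R f)

section Fintype

variable [Fintype G]

theorem card_filter_mem_subgroup (H : Subgroup G) : #(univ.filter (· ∈ H)) = Nat.card H := by
  rw [← Fintype.card_subtype, Nat.card_eq_fintype_card]

theorem normElt_eq_sum (H : Subgroup G) :
    normElt R H = ∑ h ∈ univ.filter (· ∈ H), single h 1 := by
  rw [normElt]
  exact (sum_subtype _ (fun _ => mem_filter_univ _) (fun h => single h (1 : R))).symm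

theorem normElt_eq_one_add_sum (H : Subgroup G) :
    normElt R H = 1 + ∑ h ∈ (univ.filter (· ∈ H)).erase 1, single h 1 := by
  rw [normElt_eq_sum, ← add_sum_erase _ _ (mem_filter.mpr ⟨mem_univ _, H.one_mem⟩), one_def]

theorem card_filter_mem_zpowers (hE : ∀ x ∈ E, x ^ p = 1) {h : G}
    (hh : h ∈ (univ.filter (· ∈ E)).erase 1) :
    #(((univ.filter (· ∈ E)).erase 1).filter (h ∈ zpowers ·)) = p - 1 := by
  obtain ⟨hh1, hhE⟩ : h ≠ 1 ∧ h ∈ E := by simpa using hh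
  have hfilter : ((univ.filter (· ∈ E)).erase 1).filter (h ∈ zpowers ·)
      = (univ.filter (· ∈ zpowers h)).erase 1 := by
    ext g
    simp only [mem_filter, mem_erase, mem_univ, true_and]
    constructor
    · rintro ⟨⟨hg1, hgE⟩, hmem⟩
      exact ⟨hg1, (mem_zpowers_comm (hE g hgE) (hE h hhE) hg1 hh1).mp hmem⟩
    · rintro ⟨hg1, hmem⟩
      have hgE : g ∈ E := zpowers_le.mpr hhE hmem
      exact ⟨⟨hg1, hgE⟩, (mem_zpowers_comm (hE g hgE) (hE h hhE) hg1 hh1).mpr hmem⟩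
  rw [hfilter, card_erase_of_mem (by simp [one_mem]), card_filter_mem_subgroup, Nat.card_zpowers,
    orderOf_eq_prime (hE h hhE) hh1]

theorem sum_normElt_zpowers (hE : ∀ x ∈ E, x ^ p = 1) :
    ∑ g ∈ (univ.filter (· ∈ E)).erase 1, normElt R (zpowers g)
      = #((univ.filter (· ∈ E)).erase 1)
        + (p - 1) • ∑ h ∈ (univ.filter (· ∈ E)).erase 1, single h (1 : R) := by
  set S := (univ.filter (· ∈ E)).erase 1
  have hcyclic : ∀ g ∈ S, (univ.filter (· ∈ zpowers g)).erase 1 = S.filter (· ∈ zpowers g) := by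
    intro g hg
    have hgE : g ∈ E := by simpa using (mem_erase.mp hg).2
    ext h
    simp only [S, mem_filter, mem_erase, mem_univ, true_and]
    exact ⟨fun ⟨hh1, hmem⟩ => ⟨⟨hh1, zpowers_le.mpr hgE hmem⟩, hmem⟩,
      fun ⟨⟨hh1, _⟩, hmem⟩ => ⟨hh1, hmem⟩⟩
  calc ∑ g ∈ S, normElt R (zpowers g)
      = ∑ g ∈ S, (1 + ∑ h ∈ S.filter (· ∈ zpowers g), single h (1 : R)) :=
        sum_congr rfl fun g hg => by rw [normElt_eq_one_add_sum, hcyclic g hg]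
    _ = #S + ∑ h ∈ S, #(S.filter (h ∈ zpowers ·)) • single h (1 : R) := by
        rw [sum_add_distrib, sum_const, nsmul_one]
        congr 1
        rw [sum_comm' (t' := S) (s' := fun h => S.filter (h ∈ zpowers ·))
          (by simp only [mem_filter]; tauto)]
        simp only [sum_const]
    _ = #S + (p - 1) • ∑ h ∈ S, single h (1 : R) := by
        rw [smul_sum]
        exact congrArg _ (sum_congr rfl fun h hh => by rw [card_filter_mem_zpowers hE hh])

end Fintype

theorem natCast_card_sub_mem_normIdeal [Finite G] (hE : ∀ x ∈ E, x ^ p = 1) (hE1 : E ≠ ⊥) :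
    (Nat.card E : MonoidAlgebra R G) - p ∈ normIdeal R G := by
  have := Fintype.ofFinite G
  set S := (univ.filter (· ∈ E)).erase 1
  have hcard : #S + 1 = Nat.card E := by
    rw [card_erase_add_one (mem_filter.mpr ⟨mem_univ _, E.one_mem⟩), card_filter_mem_subgroup]
  have hidentity : (Nat.card E : MonoidAlgebra R G) - p
      = ∑ g ∈ S, normElt R (zpowers g) - (p - 1) • normElt R E := by
    rw [sum_normElt_zpowers R hE, normElt_eq_one_add_sum, ← hcard, nsmul_eq_mul, nsmul_eq_mul,
      Nat.cast_sub (Fact.out : p.Prime).one_le]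
    push_cast
    rw [mul_add, mul_one]
    abel
  rw [hidentity]
  refine sub_mem (sum_mem fun g hg => normElt_mem_normIdeal R ?_)
    (nsmul_mem (normElt_mem_normIdeal R hE1) _)
  exact zpowers_eq_bot.not.mpr (mem_erase.mp hg).1

end NormElt

theorem natCast_mem_of_sq_dvd_of_natCast_sub_mem {p : ℕ} [Fact p.Prime] {A : Type*} [Ring A]
    [Algebra ℤ_[p] A] {I : Ideal A} {n : ℕ} (hn : p ^ 2 ∣ n) (h : (n : A) - p ∈ I) :
    (p : A) ∈ I := by
  obtain ⟨c, rfl⟩ := hn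
  obtain ⟨u, hu⟩ : IsUnit (1 - p * c : ℤ_[p]) :=
    IsLocalRing.isUnit_one_sub_self_of_mem_nonunits _ (mul_mem_nonunits_left PadicInt.p_nonunit)
  have hp : (p : A) = algebraMap ℤ_[p] A (-↑u⁻¹) * (((p ^ 2 * c : ℕ) : A) - p) := by
    have hsub : ((p ^ 2 * c : ℕ) : ℤ_[p]) - p = -(1 - p * c) * p := by push_cast; ring
    rw [← map_natCast (algebraMap ℤ_[p] A), ← map_natCast (algebraMap ℤ_[p] A), ← map_sub,
      ← map_mul, hsub, ← hu, ← mul_assoc, neg_mul_neg, Units.inv_mul, one_mul]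
  rw [hp]
  exact I.mul_mem_left _ h

theorem quotient_by_norm_ideal_has_p_torsion (p : ℕ) [Fact p.Prime]
    (G : Type*) [CommGroup G] [Finite G] (hG : IsPGroup p G) (hnc : ¬ IsCyclic G) :
    Nontrivial (MonoidAlgebra ℤ_[p] G ⧸ normIdeal ℤ_[p] G) ∧
      (p : MonoidAlgebra ℤ_[p] G ⧸ normIdeal ℤ_[p] G) = 0 ∧
      ∃ x : MonoidAlgebra ℤ_[p] G ⧸ normIdeal ℤ_[p] G,
        x ≠ 0 ∧ (p : MonoidAlgebra ℤ_[p] G ⧸ normIdeal ℤ_[p] G) * x = 0 := by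
  have hdvd := hG.sq_dvd_card_ker_powMonoidHom hnc
  have hker : (powMonoidHom p : G →* G).ker ≠ ⊥ := fun h => by
    simp [h, (Fact.out : p.Prime).ne_one] at hdvd
  have hp : (p : MonoidAlgebra ℤ_[p] G) ∈ normIdeal ℤ_[p] G :=
    natCast_mem_of_sq_dvd_of_natCast_sub_mem hdvd
      (natCast_card_sub_mem_normIdeal ℤ_[p] (fun _ => MonoidHom.mem_ker.mp) hker)
  have hp0 : (p : MonoidAlgebra ℤ_[p] G ⧸ normIdeal ℤ_[p] G) = 0 := by
    rw [← map_natCast (Ideal.Quotient.mk (normIdeal ℤ_[p] G))]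
    exact Ideal.Quotient.eq_zero_iff_mem.mpr hp
  have hnt : Nontrivial (MonoidAlgebra ℤ_[p] G ⧸ normIdeal ℤ_[p] G) :=
    Ideal.Quotient.nontrivial_iff.mpr (hG.normIdeal_ne_top ℤ_[p] PadicInt.toZMod)
  exact ⟨hnt, hp0, 1, one_ne_zero, by rw [hp0, zero_mul]⟩
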